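/- Let A be an m×n real matrix, v : ℕ → ℝ^m, w : ℕ → ℝ^n, and let H : ℕ → (n×n real matrices) satisfy the scaled ABS recursion: for every k with 1 ≤ k ≤ i, the denominator δ k = w k ⬝ᵥ (H k *ᵥ (Aᵀ *ᵥ v k)) is nonzero and H (k+1) = H k - (1/δ k) • vecMulVec (H k *ᵥ (Aᵀ *ᵥ v k)) ((H k)ᵀ *ᵥ w k). Then for every j with 1 ≤ j ≤ i, one has H (i+1) *ᵥ (Aᵀ *ᵥ v j) = 0 and (H (i+1))ᵀ *ᵥ (w j) = 0. -/

import Mathlib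

/-!
One step `H ↦ H - (1/δ) • (H x)(Hᵀ y)ᵀ` with `δ = yᵀ H x` kills `x` on the right and `y` on the
left, and it keeps every vector already killed: if `H z = 0` then `(Hᵀ y)ᵀ z = yᵀ H z = 0`, so the
rank-one correction vanishes on `z`. Since the transpose of the step is the same step for `Hᵀ`
with `x` and `y` swapped, the left annihilation follows from the right one.
-/

open Matrix

namespace Matrix

variable {ι K : Type*} [Fintype ι] [Field K]

def absUpdate (H : Matrix ι ι K) (x y : ι → K) : Matrix ι ι K :=
  H - (1 / (y ⬝ᵥ H *ᵥ x)) • vecMulVec (H *ᵥ x) (Hᵀ *ᵥ y)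

theorem absUpdate_transpose (H : Matrix ι ι K) (x y : ι → K) :
    (absUpdate H x y)ᵀ = absUpdate Hᵀ y x := by
  rw [absUpdate, absUpdate, transpose_sub, transpose_smul, transpose_vecMulVec,
    transpose_transpose, dotProduct_transpose_mulVec]

theorem absUpdate_mulVec (H : Matrix ι ι K) (x y z : ι → K) :
    absUpdate H x y *ᵥ z = H *ᵥ z - ((y ⬝ᵥ H *ᵥ z) / (y ⬝ᵥ H *ᵥ x)) • H *ᵥ x := by
  rw [absUpdate, sub_mulVec, smul_mulVec, vecMulVec_mulVec, op_smul_eq_smul,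
    dotProduct_comm (Hᵀ *ᵥ y), dotProduct_transpose_mulVec, smul_smul, one_div_mul_eq_div]

theorem absUpdate_mulVec_self {H : Matrix ι ι K} {x y : ι → K} (hδ : y ⬝ᵥ H *ᵥ x ≠ 0) :
    absUpdate H x y *ᵥ x = 0 := by
  rw [absUpdate_mulVec, div_self hδ, one_smul, sub_self]

theorem absUpdate_mulVec_of_mulVec_eq_zero (H : Matrix ι ι K) (x y : ι → K) {z : ι → K}
    (hz : H *ᵥ z = 0) : absUpdate H x y *ᵥ z = 0 := by
  rw [absUpdate_mulVec, hz, dotProduct_zero, zero_div, zero_smul, sub_zero]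

theorem absUpdate_seq_mulVec_eq_zero {H : ℕ → Matrix ι ι K} {x y : ℕ → ι → K} (i : ℕ)
    (hrec : ∀ k, 1 ≤ k → k ≤ i →
      y k ⬝ᵥ H k *ᵥ x k ≠ 0 ∧ H (k + 1) = absUpdate (H k) (x k) (y k)) :
    ∀ j, 1 ≤ j → j ≤ i → H (i + 1) *ᵥ x j = 0 := by
  induction i with
  | zero => intro j hj hji; omega
  | succ i ih =>
    intro j hj hji
    obtain ⟨hδ, hstep⟩ := hrec (i + 1) (by omega) le_rfl
    rw [hstep]
    rcases Nat.lt_or_eq_of_le hji with hlt | rfl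
    · exact absUpdate_mulVec_of_mulVec_eq_zero _ _ _
        (ih (fun k hk hki => hrec k hk (by omega)) j hj (by omega))
    · exact absUpdate_mulVec_self hδ

theorem absUpdate_seq_transpose_mulVec_eq_zero {H : ℕ → Matrix ι ι K} {x y : ℕ → ι → K} (i : ℕ)
    (hrec : ∀ k, 1 ≤ k → k ≤ i →
      y k ⬝ᵥ H k *ᵥ x k ≠ 0 ∧ H (k + 1) = absUpdate (H k) (x k) (y k)) :
    ∀ j, 1 ≤ j → j ≤ i → (H (i + 1))ᵀ *ᵥ y j = 0 :=
  absUpdate_seq_mulVec_eq_zero (H := fun k => (H k)ᵀ) i fun k hk hki => by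
    obtain ⟨hδ, hstep⟩ := hrec k hk hki
    exact ⟨by rwa [dotProduct_transpose_mulVec], by rw [hstep, absUpdate_transpose]⟩

end Matrix

theorem abs_recursion_annihilates_all {m n : ℕ} (i : ℕ)
    (A : Matrix (Fin m) (Fin n) ℝ)
    (v : ℕ → Fin m → ℝ) (w : ℕ → Fin n → ℝ)
    (H : ℕ → Matrix (Fin n) (Fin n) ℝ)
    (hrec : ∀ k, 1 ≤ k → k ≤ i →
      w k ⬝ᵥ (H k *ᵥ (Aᵀ *ᵥ v k)) ≠ 0 ∧
      H (k + 1) = H k - (1 / (w k ⬝ᵥ (H k *ᵥ (Aᵀ *ᵥ v k)))) •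
        vecMulVec (H k *ᵥ (Aᵀ *ᵥ v k)) ((H k)ᵀ *ᵥ w k)) :
    ∀ j, 1 ≤ j → j ≤ i →
      H (i + 1) *ᵥ (Aᵀ *ᵥ v j) = 0 ∧ (H (i + 1))ᵀ *ᵥ w j = 0 := by
  have hstep : ∀ k, 1 ≤ k → k ≤ i → w k ⬝ᵥ H k *ᵥ (Aᵀ *ᵥ v k) ≠ 0 ∧
      H (k + 1) = absUpdate (H k) (Aᵀ *ᵥ v k) (w k) := hrec
  intro j hj hji
  exact ⟨absUpdate_seq_mulVec_eq_zero i hstep j hj hji,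
    absUpdate_seq_transpose_mulVec_eq_zero i hstep j hj hji⟩
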